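/- arXiv:2605.01237 — 2 statements merged into one kernel-verified Lean document; each statement's English description precedes it below -/
import Mathlib

section
/- Fix a location i∈[1:n] and λ≥0, and define the envelope quantities L^τ_i and U^τ_i (as extended reals). Then: (1) if τ∈(0,1), then −∞ < L^τ_i ≤ U^τ_i < ∞; (2) if τ=0 and λ>0, then L^0_i = −∞ and U^0_i = min_{k∈[1:n]} y_k; and if τ=1 and λ>0, then L^1_i = max_{k∈[1:n]} y_k and U^1_i = +∞. -/
open scoped BigOperators

noncomputable section

namespace QTVD

/-- Quantile (check) loss `ρ_τ(x) = max{τx, (τ-1)x}`. -/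
def qloss (τ x : ℝ) : ℝ := max (τ * x) ((τ - 1) * x)

/-- Total variation `TV(θ) = ∑ |θ_{i+1} - θ_i|` (coordinates indexed `0,…,n-1`). -/
def TV {n : ℕ} (θ : Fin n → ℝ) : ℝ :=
  ∑ i : Fin n, if h : (i : ℕ) + 1 < n then |θ ⟨(i : ℕ) + 1, h⟩ - θ i| else 0

/-- Quantile TVD objective. -/
def obj {n : ℕ} (τ lam : ℝ) (y θ : Fin n → ℝ) : ℝ :=
  (∑ i : Fin n, qloss τ (y i - θ i)) + lam * TV θ

/-- Quantile TVD solution set `S^τ`. -/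
def sol {n : ℕ} (τ lam : ℝ) (y : Fin n → ℝ) : Set (Fin n → ℝ) :=
  {θ | ∀ η : Fin n → ℝ, obj τ lam y θ ≤ obj τ lam y η}

/-- `k`-th smallest entry of `y` restricted to `I` (as extended real;
`⊥` if `k ≤ 0`, `⊤` if `k ≥ |I| + 1`). -/
def orderStat {n : ℕ} (y : Fin n → ℝ) (I : Finset (Fin n)) (k : ℤ) : EReal :=
  if k ≤ 0 then ⊥
  else if (I.card : ℤ) < k then ⊤
  else (((I.val.map y).sort (· ≤ ·)).getD (k.toNat - 1) 0 : ℝ)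

/-- The constant `C_{I,J}` for discrete intervals `I=[c:d] ⊆ J=[a:b] ⊆ [0:n-1]`
(0-based indexing; 1-based `[s:t] ⊆ [j1:j2] ⊆ [1:n]` corresponds to
`c = s-1, d = t-1, a = j1-1, b = j2-1`). -/
def Cconst (n c d a b : ℕ) : ℝ :=
  if 0 < a ∧ b < n - 1 then
    if a < c ∧ d < b then 1 else if c = a ∧ d = b then -1 else 0
  else if a = 0 ∧ b < n - 1 then
    if a < c ∧ d < b then 1 else if c = a ∧ d = b then -(1/2)
      else if c = 0 ∧ d < b then 1/2 else 0
  else if 0 < a ∧ b = n - 1 then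
    if a < c ∧ d < b then 1 else if c = a ∧ d = b then -(1/2)
      else if a < c ∧ d = b then 1/2 else 0
  else
    if a < c ∧ d < b then 1 else if c = a ∧ d = b then 0 else 1/2

/-- `u^τ_{I,J} = τ|I| - 2λ C_{I,J}` for `I=[c:d] ⊆ J=[a:b]`. -/
def uIJ (τ lam : ℝ) (n c d a b : ℕ) : ℝ :=
  τ * ((d : ℝ) - (c : ℝ) + 1) - 2 * lam * Cconst n c d a b

/-- `l^τ_{I,J} = τ|I| + 2λ C_{I,J}` for `I=[c:d] ⊆ J=[a:b]`. -/
def lIJ (τ lam : ℝ) (n c d a b : ℕ) : ℝ :=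
  τ * ((d : ℝ) - (c : ℝ) + 1) + 2 * lam * Cconst n c d a b

/-- Upper envelope `U^τ_i`: min over intervals `J ∋ i` of the max over
subintervals `I ⊆ J` with `i ∈ I` of `y_{I,(⌊u^τ_{I,J}⌋+1)}`. -/
def Uenv {n : ℕ} (τ lam : ℝ) (y : Fin n → ℝ) (i : Fin n) : EReal :=
  ⨅ (a : Fin n) (b : Fin n) (_ : a ≤ i) (_ : i ≤ b),
    ⨆ (c : Fin n) (d : Fin n) (_ : a ≤ c) (_ : c ≤ i) (_ : i ≤ d) (_ : d ≤ b),
      orderStat y (Finset.Icc c d) (⌊uIJ τ lam n (c : ℕ) (d : ℕ) (a : ℕ) (b : ℕ)⌋ + 1)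

/-- Lower envelope `L^τ_i`: max over intervals `J ∋ i` of the min over
subintervals `I ⊆ J` with `i ∈ I` of `y_{I,(⌈l^τ_{I,J}⌉)}`. -/
def Lenv {n : ℕ} (τ lam : ℝ) (y : Fin n → ℝ) (i : Fin n) : EReal :=
  ⨆ (a : Fin n) (b : Fin n) (_ : a ≤ i) (_ : i ≤ b),
    ⨅ (c : Fin n) (d : Fin n) (_ : a ≤ c) (_ : c ≤ i) (_ : i ≤ d) (_ : d ≤ b),
      orderStat y (Finset.Icc c d) ⌈lIJ τ lam n (c : ℕ) (d : ℕ) (a : ℕ) (b : ℕ)⌉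

/-- Admissible dual (KKT) variables `(g, z)` for a candidate solution `θ`.
`z` is indexed by `Fin (n+1)` (so `z 0,…,z n` with `z 0 = z n = 0`); the
edge between coordinates `j` and `j+1` (0-based) corresponds to `z (j+1)`. -/
def IsDual {n : ℕ} (τ lam : ℝ) (y θ : Fin n → ℝ) (g : Fin n → ℝ)
    (z : Fin (n + 1) → ℝ) : Prop :=
  z 0 = 0 ∧ z (Fin.last n) = 0 ∧
  (∀ j : Fin n, ∀ h : (j : ℕ) + 1 < n,
    (θ ⟨(j : ℕ) + 1, h⟩ < θ j → z j.succ = lam) ∧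
    (θ j = θ ⟨(j : ℕ) + 1, h⟩ → -lam ≤ z j.succ ∧ z j.succ ≤ lam) ∧
    (θ j < θ ⟨(j : ℕ) + 1, h⟩ → z j.succ = -lam)) ∧
  (∀ j : Fin n,
    (θ j < y j → g j = -τ) ∧
    (θ j = y j → -τ ≤ g j ∧ g j ≤ 1 - τ) ∧
    (y j < θ j → g j = 1 - τ)) ∧
  (∀ a b : Fin n, a ≤ b → (∑ j ∈ Finset.Icc a b, g j) = z a.castSucc - z b.succ)

/-- `sign_+(x) = 1` if `x ≥ 0`, `-1` if `x < 0`. -/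
def signP (x : ℝ) : ℝ := if 0 ≤ x then 1 else -1

/-- `sign_-(x) = 1` if `x > 0`, `-1` if `x ≤ 0`. -/
def signM (x : ℝ) : ℝ := if 0 < x then 1 else -1

/-- Submodularity with respect to the coordinatewise lattice structure on `ℝ^n`. -/
def Submodular {n : ℕ} (P : (Fin n → ℝ) → ℝ) : Prop :=
  ∀ x y : Fin n → ℝ, P (x ⊔ y) + P (x ⊓ y) ≤ P x + P y

/-- Penalized quantile regression objective with a general penalty `P`. -/
def Gobj {n : ℕ} (τ lam : ℝ) (y : Fin n → ℝ) (P : (Fin n → ℝ) → ℝ)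
    (θ : Fin n → ℝ) : ℝ :=
  (∑ j : Fin n, qloss τ (y j - θ j)) + lam * P θ

end QTVD

/-!
Everything is controlled by the index of the order statistic: `y_{I,(k)}` is `-∞` for `k ≤ 0`,
`+∞` for `k > |I|`, and a value of `y` otherwise. Taking `J = [1:n]`, where `C_{I,J} ≥ 0` with
equality only at `I = J`, bounds `L` from below and `U` from above; taking `I = J`, where
`C_{J,J} ≤ 0`, bounds `L` from above and `U` from below. At `τ ∈ {0, 1}` with `λ > 0` these
bounds pin the envelopes down, since for `J = [1:n]` every `I ≠ J` contributes `∓∞`.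
For `L ≤ U`, compare the terms of `J₁` and `J₂` at `I = J₁ ∩ J₂`: `C_{I,J}` is a sum of
contributions `1/2`, `0` or `-1/2` of the two endpoints of `I`, and each endpoint of `J₁ ∩ J₂` is
an endpoint of `J₁` or of `J₂`, so `C_{I,J₁} + C_{I,J₂} ≤ 0`, i.e. `l_{I,J₁} ≤ u_{I,J₂}`.
-/
namespace QTVD

open Finset

section OrderStat

variable {n : ℕ} (y : Fin n → ℝ) (I : Finset (Fin n))

lemma length_sort_map_val : ((I.val.map y).sort (· ≤ ·)).length = #I := by
  rw [Multiset.length_sort, Multiset.card_map, card_val]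

lemma orderStat_of_nonpos {k : ℤ} (hk : k ≤ 0) : orderStat y I k = ⊥ := by
  simp [orderStat, hk]

lemma orderStat_of_card_lt {k : ℤ} (hk : (#I : ℤ) < k) : orderStat y I k = ⊤ := by
  simp [orderStat, hk, show ¬ k ≤ 0 by omega]

lemma orderStat_eq_getElem {k : ℤ} (h₁ : 1 ≤ k) (h₂ : k ≤ #I) :
    orderStat y I k = (((I.val.map y).sort (· ≤ ·))[k.toNat - 1]'
      (by rw [length_sort_map_val]; omega) : EReal) := by
  rw [orderStat, if_neg (by omega), if_neg (by omega), List.getD_eq_getElem]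

lemma orderStat_mono : Monotone (orderStat y I) := by
  intro k k' hkk'
  by_cases hk : k ≤ 0
  · simp [orderStat_of_nonpos y I hk]
  by_cases hk' : (#I : ℤ) < k'
  · simp [orderStat_of_card_lt y I hk']
  rw [orderStat_eq_getElem y I (by omega) (by omega),
    orderStat_eq_getElem y I (by omega) (by omega)]
  exact EReal.coe_le_coe_iff.mpr
    ((Multiset.pairwise_sort _ _).sortedLE.getElem_le_getElem_of_le (by omega))

lemma exists_mem_orderStat_eq {k : ℤ} (h₁ : 1 ≤ k) (h₂ : k ≤ #I) :
    ∃ j ∈ I, orderStat y I k = y j := by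
  rw [orderStat_eq_getElem y I h₁ h₂]
  obtain ⟨j, hj, hjk⟩ :=
    Multiset.mem_map.mp ((Multiset.mem_sort (s := I.val.map y) (· ≤ ·)).mp (List.getElem_mem _))
  exact ⟨j, hj, by rw [hjk]⟩

lemma exists_orderStat_eq_of_mem {j : Fin n} (hj : j ∈ I) :
    ∃ k : ℤ, 1 ≤ k ∧ k ≤ #I ∧ orderStat y I k = y j := by
  have hmem : y j ∈ (I.val.map y).sort (· ≤ ·) :=
    (Multiset.mem_sort (· ≤ ·)).mpr (Multiset.mem_map_of_mem y hj)
  obtain ⟨p, hp, hpj⟩ := List.getElem_of_mem hmem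
  rw [length_sort_map_val] at hp
  refine ⟨p + 1, by omega, by omega, ?_⟩
  rw [orderStat_eq_getElem y I (by omega) (by omega)]
  simp [hpj]

lemma inf'_le_orderStat {s : Finset (Fin n)} (hs : s.Nonempty) (hIs : I ⊆ s) {k : ℤ}
    (hk : 1 ≤ k) : ((s.inf' hs y : ℝ) : EReal) ≤ orderStat y I k := by
  by_cases hkI : k ≤ #I
  · obtain ⟨j, hj, hjk⟩ := exists_mem_orderStat_eq y I hk hkI
    rw [hjk]
    exact EReal.coe_le_coe_iff.mpr (inf'_le y (hIs hj))
  · simp [orderStat_of_card_lt y I (not_le.mp hkI)]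

lemma orderStat_le_sup' {s : Finset (Fin n)} (hs : s.Nonempty) (hIs : I ⊆ s) {k : ℤ}
    (hk : k ≤ #I) : orderStat y I k ≤ ((s.sup' hs y : ℝ) : EReal) := by
  by_cases hk₀ : 1 ≤ k
  · obtain ⟨j, hj, hjk⟩ := exists_mem_orderStat_eq y I hk₀ hk
    rw [hjk]
    exact EReal.coe_le_coe_iff.mpr (le_sup' y (hIs hj))
  · simp [orderStat_of_nonpos y I (k := k) (by omega)]

lemma orderStat_one (hI : I.Nonempty) : orderStat y I 1 = ((I.inf' hI y : ℝ) : EReal) := by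
  refine le_antisymm ?_ (inf'_le_orderStat y I hI subset_rfl le_rfl)
  obtain ⟨j, hj, hjmin⟩ := exists_mem_eq_inf' hI y
  obtain ⟨k, hk, -, hkj⟩ := exists_orderStat_eq_of_mem y I hj
  rw [hjmin, ← hkj]
  exact orderStat_mono y I hk

lemma orderStat_card (hI : I.Nonempty) : orderStat y I #I = ((I.sup' hI y : ℝ) : EReal) := by
  refine le_antisymm (orderStat_le_sup' y I hI subset_rfl le_rfl) ?_
  obtain ⟨j, hj, hjmax⟩ := exists_mem_eq_sup' hI y
  obtain ⟨k, -, hk, hkj⟩ := exists_orderStat_eq_of_mem y I hj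
  rw [hjmax, ← hkj]
  exact orderStat_mono y I hk

end OrderStat

section Cconst

lemma Cconst_self_nonpos (n a b : ℕ) : Cconst n a b a b ≤ 0 := by
  unfold Cconst
  split_ifs <;> first | omega | norm_num

lemma Cconst_univ_nonneg (m c d : ℕ) : 0 ≤ Cconst (m + 1) c d 0 m := by
  unfold Cconst
  split_ifs <;> first | omega | norm_num

lemma Cconst_univ_pos {m c d : ℕ} (h : ¬ (c = 0 ∧ d = m)) : 0 < Cconst (m + 1) c d 0 m := by
  unfold Cconst
  split_ifs <;> first | omega | norm_num

lemma Cconst_univ_self (m : ℕ) : Cconst (m + 1) 0 m 0 m = 0 := by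
  unfold Cconst
  split_ifs <;> first | omega | rfl

lemma Cconst_eq_add {n a b c d : ℕ} (hac : a ≤ c) (hcd : c ≤ d) (hdb : d ≤ b) (hb : b < n) :
    Cconst n c d a b =
      (if a < c then 1 / 2 else if a = 0 then 0 else -(1 / 2)) +
      (if d < b then 1 / 2 else if b = n - 1 then 0 else -(1 / 2)) := by
  unfold Cconst
  split_ifs <;> first | omega | norm_num

lemma Cconst_inf_add_nonpos {n a₁ b₁ a₂ b₂ : ℕ} (h₁ : max a₁ a₂ ≤ min b₁ b₂)
    (hb₁ : b₁ < n) (hb₂ : b₂ < n) :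
    Cconst n (max a₁ a₂) (min b₁ b₂) a₁ b₁ + Cconst n (max a₁ a₂) (min b₁ b₂) a₂ b₂ ≤ 0 := by
  rw [Cconst_eq_add (le_max_left _ _) h₁ (min_le_left _ _) hb₁,
    Cconst_eq_add (le_max_right _ _) h₁ (min_le_right _ _) hb₂]
  split_ifs <;> first | omega | norm_num

end Cconst

section Envelope

variable {n : ℕ} {τ lam : ℝ}

lemma lIJ_of_le (a b : ℕ) {c d : Fin n} (h : c ≤ d) :
    lIJ τ lam n c d a b = τ * #(Icc c d) + 2 * lam * Cconst n c d a b := by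
  rw [lIJ, Fin.card_Icc, Nat.cast_sub (by omega)]
  push_cast
  ring

lemma uIJ_of_le (a b : ℕ) {c d : Fin n} (h : c ≤ d) :
    uIJ τ lam n c d a b = τ * #(Icc c d) - 2 * lam * Cconst n c d a b := by
  rw [uIJ, Fin.card_Icc, Nat.cast_sub (by omega)]
  push_cast
  ring

lemma Icc_zero_last (m : ℕ) : Icc (0 : Fin (m + 1)) (Fin.last m) = univ :=
  eq_univ_of_forall fun j => mem_Icc.mpr ⟨Fin.zero_le j, Fin.le_last j⟩

lemma card_Icc_pos {c d : Fin n} (h : c ≤ d) : (0 : ℝ) < #(Icc c d) := by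
  exact_mod_cast (nonempty_Icc.mpr h).card_pos

lemma le_Lenv_of_univ {m : ℕ} {y : Fin (m + 1) → ℝ} {i : Fin (m + 1)} {x : EReal}
    (h : ∀ c d : Fin (m + 1), c ≤ d →
      x ≤ orderStat y (Icc c d) ⌈lIJ τ lam (m + 1) c d 0 m⌉) :
    x ≤ Lenv τ lam y i := by
  refine le_trans ?_ (le_iSup_of_le 0 <| le_iSup_of_le (Fin.last m) <|
    le_iSup_of_le (Fin.zero_le i) <| le_iSup_of_le (Fin.le_last i) le_rfl)
  simp only [le_iInf_iff]
  intro c d _ hci hid _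
  simpa using h c d (hci.trans hid)

lemma Uenv_le_of_univ {m : ℕ} {y : Fin (m + 1) → ℝ} {i : Fin (m + 1)} {x : EReal}
    (h : ∀ c d : Fin (m + 1), c ≤ d →
      orderStat y (Icc c d) (⌊uIJ τ lam (m + 1) c d 0 m⌋ + 1) ≤ x) :
    Uenv τ lam y i ≤ x := by
  refine le_trans (iInf_le_of_le 0 <| iInf_le_of_le (Fin.last m) <|
    iInf_le_of_le (Fin.zero_le i) <| iInf_le_of_le (Fin.le_last i) le_rfl) ?_
  simp only [iSup_le_iff]
  intro c d _ hci hid _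
  simpa using h c d (hci.trans hid)

variable {y : Fin n → ℝ} {i : Fin n}

lemma Lenv_le_of_diag {x : EReal}
    (h : ∀ a b : Fin n, a ≤ b → orderStat y (Icc a b) ⌈lIJ τ lam n a b a b⌉ ≤ x) :
    Lenv τ lam y i ≤ x := by
  simp only [Lenv, iSup_le_iff]
  intro a b hai hib
  exact iInf_le_of_le a <| iInf_le_of_le b <| iInf_le_of_le le_rfl <| iInf_le_of_le hai <|
    iInf_le_of_le hib <| iInf_le_of_le le_rfl (h a b (hai.trans hib))

lemma le_Uenv_of_diag {x : EReal}
    (h : ∀ a b : Fin n, a ≤ b → x ≤ orderStat y (Icc a b) (⌊uIJ τ lam n a b a b⌋ + 1)) :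
    x ≤ Uenv τ lam y i := by
  simp only [Uenv, le_iInf_iff]
  intro a b hai hib
  exact le_iSup_of_le a <| le_iSup_of_le b <| le_iSup_of_le le_rfl <| le_iSup_of_le hai <|
    le_iSup_of_le hib <| le_iSup_of_le le_rfl (h a b (hai.trans hib))

theorem Lenv_le_Uenv (hlam : 0 ≤ lam) : Lenv τ lam y i ≤ Uenv τ lam y i := by
  simp only [Lenv, Uenv, iSup_le_iff, le_iInf_iff]
  intro a₂ b₂ ha₂ hb₂ a₁ b₁ ha₁ hb₁
  have hci : max a₁ a₂ ≤ i := max_le ha₁ ha₂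
  have hid : i ≤ min b₁ b₂ := le_min hb₁ hb₂
  have hC := Cconst_inf_add_nonpos (n := n) (a₁ := a₁) (a₂ := a₂)
    (by exact_mod_cast (hci.trans hid)) b₁.isLt b₂.isLt
  have hlu : lIJ τ lam n (max a₁ a₂ : Fin n) (min b₁ b₂ : Fin n) a₁ b₁ ≤
      uIJ τ lam n (max a₁ a₂ : Fin n) (min b₁ b₂ : Fin n) a₂ b₂ := by
    rw [Fin.coe_max, Fin.coe_min, lIJ, uIJ]
    nlinarith
  calc
    _ ≤ orderStat y (Icc (max a₁ a₂) (min b₁ b₂))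
          ⌈lIJ τ lam n (max a₁ a₂ : Fin n) (min b₁ b₂ : Fin n) a₁ b₁⌉ := by
      exact iInf_le_of_le _ <| iInf_le_of_le _ <| iInf_le_of_le (le_max_left _ _) <|
        iInf_le_of_le hci <| iInf_le_of_le hid <| iInf_le_of_le (min_le_left _ _) le_rfl
    _ ≤ orderStat y (Icc (max a₁ a₂) (min b₁ b₂))
          (⌊uIJ τ lam n (max a₁ a₂ : Fin n) (min b₁ b₂ : Fin n) a₂ b₂⌋ + 1) :=
      orderStat_mono y _ ((Int.ceil_mono hlu).trans (Int.ceil_le_floor_add_one _))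
    _ ≤ _ := by
      exact le_iSup_of_le _ <| le_iSup_of_le _ <| le_iSup_of_le (le_max_right _ _) <|
        le_iSup_of_le hci <| le_iSup_of_le hid <| le_iSup_of_le (min_le_right _ _) le_rfl

end Envelope

section Levels

variable {n : ℕ} {τ lam : ℝ} (y : Fin n → ℝ) (i : Fin n)

theorem bot_lt_Lenv (hτ : 0 < τ) (hlam : 0 ≤ lam) : ⊥ < Lenv τ lam y i := by
  obtain ⟨m, rfl⟩ := Nat.exists_eq_add_one.mpr i.pos
  refine (EReal.bot_lt_coe (univ.inf' univ_nonempty y)).trans_le <|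
    le_Lenv_of_univ fun c d hcd => inf'_le_orderStat y _ _ (subset_univ _) ?_
  rw [Int.one_le_ceil_iff, lIJ_of_le _ _ hcd]
  have := Cconst_univ_nonneg m c d
  have := card_Icc_pos hcd
  positivity

theorem Uenv_lt_top (hτ : τ < 1) (hlam : 0 ≤ lam) : Uenv τ lam y i < ⊤ := by
  obtain ⟨m, rfl⟩ := Nat.exists_eq_add_one.mpr i.pos
  refine lt_of_le_of_lt (Uenv_le_of_univ fun c d hcd =>
    orderStat_le_sup' y _ univ_nonempty (subset_univ _) ?_) (EReal.coe_lt_top _)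
  rw [Int.add_one_le_iff, Int.floor_lt, uIJ_of_le _ _ hcd]
  have := Cconst_univ_nonneg m c d
  have := card_Icc_pos hcd
  push_cast
  nlinarith

theorem Lenv_eq_bot_of_nonpos (hτ : τ ≤ 0) (hlam : 0 ≤ lam) : Lenv τ lam y i = ⊥ := by
  refine le_bot_iff.mp <| Lenv_le_of_diag fun a b hab => (orderStat_of_nonpos y _ ?_).le
  rw [Int.ceil_le, lIJ_of_le _ _ hab]
  have := Cconst_self_nonpos n a b
  have := card_Icc_pos hab
  push_cast
  nlinarith

theorem Uenv_eq_top_of_one_le (hτ : 1 ≤ τ) (hlam : 0 ≤ lam) : Uenv τ lam y i = ⊤ := by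
  refine top_le_iff.mp <| le_Uenv_of_diag fun a b hab => (orderStat_of_card_lt y _ ?_).ge
  rw [Int.lt_add_one_iff, Int.le_floor, uIJ_of_le _ _ hab]
  have := Cconst_self_nonpos n a b
  have := card_Icc_pos hab
  push_cast
  nlinarith

theorem Uenv_zero_eq_inf' (hlam : 0 < lam) :
    Uenv 0 lam y i = ((univ.inf' ⟨i, mem_univ i⟩ y : ℝ) : EReal) := by
  obtain ⟨m, rfl⟩ := Nat.exists_eq_add_one.mpr i.pos
  refine le_antisymm (Uenv_le_of_univ fun c d hcd => ?_) <|
    le_Uenv_of_diag fun a b hab => inf'_le_orderStat y _ _ (subset_univ _) ?_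
  · by_cases hfull : (c : ℕ) = 0 ∧ (d : ℕ) = m
    · obtain ⟨rfl, rfl⟩ : c = 0 ∧ d = Fin.last m := ⟨Fin.ext hfull.1, Fin.ext hfull.2⟩
      simp [uIJ, Cconst_univ_self, Icc_zero_last, orderStat_one]
    · refine (orderStat_of_nonpos y _ ?_).trans_le bot_le
      rw [Int.add_one_le_iff, Int.floor_lt, uIJ]
      have := Cconst_univ_pos hfull
      push_cast
      nlinarith
  · rw [le_add_iff_nonneg_left, Int.floor_nonneg, uIJ]
    have := Cconst_self_nonpos (m + 1) a b
    nlinarith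

theorem Lenv_one_eq_sup' (hlam : 0 < lam) :
    Lenv 1 lam y i = ((univ.sup' ⟨i, mem_univ i⟩ y : ℝ) : EReal) := by
  obtain ⟨m, rfl⟩ := Nat.exists_eq_add_one.mpr i.pos
  refine le_antisymm (Lenv_le_of_diag fun a b hab =>
    orderStat_le_sup' y _ _ (subset_univ _) ?_) (le_Lenv_of_univ fun c d hcd => ?_)
  · rw [Int.ceil_le, lIJ_of_le _ _ hab]
    have := Cconst_self_nonpos (m + 1) a b
    push_cast
    nlinarith
  · by_cases hfull : (c : ℕ) = 0 ∧ (d : ℕ) = m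
    · obtain ⟨rfl, rfl⟩ : c = 0 ∧ d = Fin.last m := ⟨Fin.ext hfull.1, Fin.ext hfull.2⟩
      rw [lIJ_of_le _ _ (Fin.zero_le _)]
      simpa [Cconst_univ_self, Icc_zero_last] using (orderStat_card y univ univ_nonempty).ge
    · refine le_top.trans_eq (orderStat_of_card_lt y _ ?_).symm
      rw [Int.lt_ceil, lIJ_of_le _ _ hcd]
      have := Cconst_univ_pos hfull
      push_cast
      nlinarith

end Levels

end QTVD

/-- Finiteness / degeneracy of the envelope bounds.
For any location `i` and `λ ≥ 0`: if `τ ∈ (0,1)` then `-∞ < L^τ_i ≤ U^τ_i < ∞`;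
if `τ = 0` and `λ > 0` then `L^0_i = -∞` and `U^0_i = min_k y_k`; and if `τ = 1`
and `λ > 0` then `L^1_i = max_k y_k` and `U^1_i = +∞`. -/
theorem envelope_finiteness_and_degenerate_levels
    {n : ℕ} (lam : ℝ) (hlam : 0 ≤ lam) (y : Fin n → ℝ) (i : Fin n) :
    (∀ τ : ℝ, 0 < τ → τ < 1 →
      ⊥ < QTVD.Lenv τ lam y i ∧
      QTVD.Lenv τ lam y i ≤ QTVD.Uenv τ lam y i ∧
      QTVD.Uenv τ lam y i < ⊤) ∧
    (0 < lam →
      QTVD.Lenv 0 lam y i = ⊥ ∧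
      QTVD.Uenv 0 lam y i = ((Finset.univ.inf' ⟨i, Finset.mem_univ i⟩ y : ℝ) : EReal)) ∧
    (0 < lam →
      QTVD.Lenv 1 lam y i = ((Finset.univ.sup' ⟨i, Finset.mem_univ i⟩ y : ℝ) : EReal) ∧
      QTVD.Uenv 1 lam y i = ⊤) :=
  ⟨fun _ hτ₀ hτ₁ => ⟨QTVD.bot_lt_Lenv y i hτ₀ hlam, QTVD.Lenv_le_Uenv hlam,
      QTVD.Uenv_lt_top y i hτ₁ hlam⟩,
    fun hlam₀ => ⟨QTVD.Lenv_eq_bot_of_nonpos y i le_rfl hlam, QTVD.Uenv_zero_eq_inf' y i hlam₀⟩,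
    fun hlam₀ => ⟨QTVD.Lenv_one_eq_sup' y i hlam₀, QTVD.Uenv_eq_top_of_one_le y i le_rfl hlam⟩⟩
end
end

section
/- (Deterministic local bias–variance decomposition.) Fix τ∈(0,1), λ≥0, θ*∈ℝ^n and ε∈ℝ^n, and let y=θ*+ε. Then for any quantile TVD solution θ̂∈S^τ and any location i∈[1:n]: θ̂_i − θ*_i ≤ min over discrete intervals J containing i of [ max_{k∈J}(θ*_k−θ*_i) + max over discrete intervals I⊆J containing i of ε_{I,(⌊u^τ_{I,J}⌋+1)} ], and θ̂_i − θ*_i ≥ max over discrete intervals J containing i of [ min_{k∈J}(θ*_k−θ*_i) + min over discrete intervals I⊆J containing i of ε_{I,(⌈l^τ_{I,J}⌉)} ]. -/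
open scoped BigOperators

noncomputable section

namespace QTVD

/-!
Fix `J = [a:b] ∋ i` and let `I = [c:d] ⊆ J` be the largest interval around `i` on which
`θ̂ ≥ θ̂_i`. Lowering `θ̂` by a small `t > 0` on `I` cannot decrease the objective; comparing
first-order changes bounds the number of `j ∈ I` with `y_j < θ̂_j` by `τ|I|` plus `λ` times the
signs of the two boundary jumps of `I`, and maximality of `I` inside `J` turns this into
`#{j ∈ I | y_j < θ̂_j} ≤ u_{I,J}`. If `θ̂_i - θ*_i` exceeded the bias term plus the
`(⌊u_{I,J}⌋ + 1)`-th smallest `ε_j` on `I`, then every `j ∈ I` whose noise is at most that order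
statistic would satisfy `y_j < θ̂_i ≤ θ̂_j`: more than `u_{I,J}` of them.

The lower bound is the upper bound for `(-θ*, -ε, -θ̂)` at level `1 - τ`: `-θ̂` solves the
problem for `-y` at level `1 - τ`, and the order statistics of `-ε` are those of `ε` reversed.
-/

open Finset

variable {n : ℕ}

lemma qloss_add_of_le {τ x t : ℝ} (ht : 0 ≤ t) (hxt : x < 0 → t ≤ -x) :
    qloss τ (x + t) = qloss τ x + t * (τ - if x < 0 then 1 else 0) := by
  unfold qloss
  split_ifs with hx
  · rw [max_eq_right (by nlinarith [hxt hx]), max_eq_right (by nlinarith)]; ring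
  · rw [max_eq_left (by nlinarith), max_eq_left (by nlinarith)]; ring

lemma sum_qloss_sub_indicator (τ : ℝ) {t : ℝ} (ht : 0 ≤ t) (y θ : Fin n → ℝ) (I : Finset (Fin n))
    (hsmall : ∀ j ∈ I, y j < θ j → t ≤ θ j - y j) :
    ∑ j, qloss τ (y j - (θ j - if j ∈ I then t else 0)) =
      ∑ j, qloss τ (y j - θ j) + t * (τ * #I - #{j ∈ I | y j < θ j}) := by
  have hterm : ∀ j, qloss τ (y j - (θ j - if j ∈ I then t else 0)) =
      qloss τ (y j - θ j) + if j ∈ I then t * (τ - if y j < θ j then 1 else 0) else 0 := by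
    intro j
    by_cases hj : j ∈ I
    · simp only [hj, if_true]
      rw [show y j - (θ j - t) = y j - θ j + t by ring,
        qloss_add_of_le ht (fun h => by linarith [hsmall j hj (sub_neg.1 h)])]
      simp only [sub_neg]
    · simp [hj]
  simp only [hterm, sum_add_distrib, sum_ite_mem, univ_inter, ← mul_sum, sum_sub_distrib,
    sum_const, nsmul_eq_mul, sum_boole]
  ring

lemma abs_sub_add_le_add_mul_signP {p q t : ℝ} (ht : 0 ≤ t) (hpq : q < p → t ≤ p - q) :
    |q - p + t| ≤ |q - p| + t * signP (q - p) := by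
  unfold signP
  split_ifs with h
  · rw [abs_of_nonneg h, abs_of_nonneg (by linarith)]; linarith
  · have := hpq (by linarith)
    rw [abs_of_neg (a := q - p) (by linarith), abs_of_nonpos (a := q - p + t) (by linarith)]
    linarith

lemma TV_add_step (θ : Fin n → ℝ) (s : ℝ) (k : ℕ) :
    TV (fun j => θ j + if k ≤ (j : ℕ) then s else 0) =
      TV θ + if h : 0 < k ∧ k < n then
        |θ ⟨k, h.2⟩ - θ ⟨k - 1, by omega⟩ + s| - |θ ⟨k, h.2⟩ - θ ⟨k - 1, by omega⟩| else 0 := by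
  unfold TV
  rw [← sub_eq_iff_eq_add', ← sum_sub_distrib]
  have hsame : ∀ j : Fin n, ((j : ℕ) + 1 < n → (j : ℕ) + 1 ≠ k) →
      ((if h : (j : ℕ) + 1 < n then
          |θ ⟨j + 1, h⟩ + (if k ≤ (j : ℕ) + 1 then s else 0) - (θ j + if k ≤ (j : ℕ) then s else 0)|
        else 0) - if h : (j : ℕ) + 1 < n then |θ ⟨j + 1, h⟩ - θ j| else 0) = 0 := by
    intro j hj
    split_ifs with hjn <;> first | (have := hj hjn; omega) | simp
  split_ifs with h
  · rw [sum_eq_single ⟨k - 1, by omega⟩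
      (fun j _ hj => hsame j fun _ hjk => hj (Fin.ext (show (j : ℕ) = k - 1 by omega))) (by simp)]
    have hk : k - 1 + 1 = k := by omega
    simp only [hk, dif_pos h.2, le_refl, if_true, show ¬ k ≤ k - 1 by omega, if_false, add_zero,
      add_sub_right_comm]
  · exact sum_eq_zero fun j _ => hsame j fun hjn hjk => h ⟨by omega, by omega⟩

def leftSign (θ : Fin n → ℝ) (c : Fin n) : ℝ :=
  if hc : 0 < (c : ℕ) then signP (θ ⟨c - 1, by omega⟩ - θ c) else 0

def rightSign (θ : Fin n → ℝ) (d : Fin n) : ℝ :=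
  if hd : (d : ℕ) + 1 < n then signP (θ ⟨d + 1, hd⟩ - θ d) else 0

lemma TV_sub_indicator_Icc_le (θ : Fin n → ℝ) {c d : Fin n} (hcd : c ≤ d) {t : ℝ} (ht : 0 ≤ t)
    (hsmall : ∀ j k, θ k < θ j → t ≤ θ j - θ k) :
    TV (fun j => θ j - if j ∈ Icc c d then t else 0) ≤
      TV θ + t * (leftSign θ c + rightSign θ d) := by
  rw [Fin.le_def] at hcd
  -- `1_{[c:d]} = 1_{≥ c} - 1_{≥ d+1}`, and each step changes a single edge of the total variation.
  set θ₁ : Fin n → ℝ := fun j => θ j + if (c : ℕ) ≤ j then -t else 0 with hθ₁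
  have hsplit : (fun j => θ j - if j ∈ Icc c d then t else 0) =
      fun j => θ₁ j + if (d : ℕ) + 1 ≤ j then t else 0 := by
    funext j
    simp only [θ₁, mem_Icc, Fin.le_def]
    split_ifs <;> first | omega | ring
  have hleft : TV θ₁ ≤ TV θ + t * leftSign θ c := by
    rw [hθ₁, TV_add_step, leftSign]
    split_ifs with h h'
    · set θ' := θ ⟨c - 1, by omega⟩
      simp only [Fin.eta]
      rw [show θ c - θ' + -t = -(θ' - θ c + t) by ring, abs_neg, abs_sub_comm (θ c)]
      linarith [abs_sub_add_le_add_mul_signP (p := θ c) (q := θ') ht (hsmall _ _)]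
    · omega
    · have := c.isLt; omega
    · simp
  have hright :
      TV (fun j => θ₁ j + if (d : ℕ) + 1 ≤ j then t else 0) ≤ TV θ₁ + t * rightSign θ d := by
    rw [TV_add_step, rightSign]
    split_ifs with h h'
    · have hd : (⟨d + 1 - 1, by omega⟩ : Fin n) = d := by ext; simp
      have hdiff : θ₁ ⟨d + 1, h'⟩ - θ₁ d = θ ⟨d + 1, h'⟩ - θ d := by
        simp only [hθ₁]
        rw [if_pos hcd, if_pos (show (c : ℕ) ≤ d + 1 by omega)]
        ring
      rw [hd, hdiff]
      linarith [abs_sub_add_le_add_mul_signP (p := θ d) (q := θ ⟨d + 1, h'⟩) ht (hsmall _ _)]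
    · omega
    · omega
    · simp
  rw [hsplit]
  linarith

lemma exists_pos_le_of_pos {ι : Type*} [Finite ι] (f : ι → ℝ) :
    ∃ t > 0, ∀ i, 0 < f i → t ≤ f i := by
  have hsmall : ∀ᶠ t in nhdsWithin (0 : ℝ) (Set.Ioi 0), 0 < t ∧ ∀ i, 0 < f i → t ≤ f i := by
    refine eventually_mem_nhdsWithin.and (Filter.eventually_all.2 fun i => ?_)
    by_cases hi : 0 < f i
    · exact Filter.Eventually.filter_mono nhdsWithin_le_nhds
        ((eventually_le_nhds hi).mono fun t ht _ => ht)
    · exact Filter.Eventually.of_forall fun t h => absurd h hi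
  exact hsmall.exists

theorem card_filter_lt_le_of_mem_sol {τ lam : ℝ} (hlam : 0 ≤ lam) {y θ : Fin n → ℝ}
    (hθ : θ ∈ sol τ lam y) {c d : Fin n} (hcd : c ≤ d) :
    (#{j ∈ Icc c d | y j < θ j} : ℝ) ≤
      τ * #(Icc c d) + lam * (leftSign θ c + rightSign θ d) := by
  -- below every positive gap, `t` lets `θ - t • 1_{[c:d]}` cross no data point and no neighbour
  obtain ⟨t₁, ht₁, hjump⟩ := exists_pos_le_of_pos fun jk : Fin n × Fin n => θ jk.1 - θ jk.2
  obtain ⟨t₂, ht₂, hres⟩ := exists_pos_le_of_pos fun j => θ j - y j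
  set t := min t₁ t₂
  have ht : 0 < t := lt_min ht₁ ht₂
  have hloss := sum_qloss_sub_indicator τ ht.le y θ (Icc c d)
    fun j _ hj => (min_le_right _ _).trans (hres j (sub_pos.2 hj))
  have htv := TV_sub_indicator_Icc_le θ hcd ht.le
    fun j k hjk => (min_le_left _ _).trans (hjump (j, k) (sub_pos.2 hjk))
  have hopt := hθ fun j => θ j - if j ∈ Icc c d then t else 0
  rw [obj, obj, hloss] at hopt
  have : 0 ≤ t * (τ * #(Icc c d) - #{j ∈ Icc c d | y j < θ j} +
      lam * (leftSign θ c + rightSign θ d)) := by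
    nlinarith [mul_le_mul_of_nonneg_left htv hlam]
  linarith [(mul_nonneg_iff_of_pos_left ht).1 this]

lemma exists_left_end (p : Fin n → Prop) [DecidablePred p] {a i : Fin n} (hai : a ≤ i)
    (hi : p i) :
    ∃ c, a ≤ c ∧ c ≤ i ∧ (∀ j, c ≤ j → j ≤ i → p j) ∧
      ∀ j : Fin n, a ≤ j → (j : ℕ) + 1 = c → ¬ p j := by
  set S := {c ∈ Icc a i | ∀ j, c ≤ j → j ≤ i → p j}
  have hiS : i ∈ S :=
    mem_filter.2 ⟨mem_Icc.2 ⟨hai, le_rfl⟩, fun j h1 h2 => le_antisymm h2 h1 ▸ hi⟩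
  obtain ⟨hc, hall⟩ := mem_filter.1 (S.min'_mem ⟨i, hiS⟩)
  refine ⟨S.min' ⟨i, hiS⟩, (mem_Icc.1 hc).1, (mem_Icc.1 hc).2, hall, fun j haj hjc hpj => ?_⟩
  have hjS : j ∈ S := by
    refine mem_filter.2 ⟨mem_Icc.2 ⟨haj, ?_⟩, fun k hjk hki => ?_⟩
    · exact (Fin.le_def.2 (by omega)).trans (mem_Icc.1 hc).2
    · rcases hjk.lt_or_eq with hjk | rfl
      · exact hall k (Fin.le_def.2 (by rw [Fin.lt_def] at hjk; omega)) hki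
      · exact hpj
  have := Fin.le_def.1 (S.min'_le j hjS)
  omega

lemma exists_right_end (p : Fin n → Prop) [DecidablePred p] {i b : Fin n} (hib : i ≤ b)
    (hi : p i) :
    ∃ d, i ≤ d ∧ d ≤ b ∧ (∀ j, i ≤ j → j ≤ d → p j) ∧
      ∀ j : Fin n, j ≤ b → (j : ℕ) = d + 1 → ¬ p j := by
  obtain ⟨c, hbc, hci, hall, hend⟩ :=
    exists_left_end (p ∘ Fin.rev) (Fin.rev_le_rev.2 hib) (by simpa using hi)
  refine ⟨c.rev, Fin.le_rev_iff.2 hci, Fin.rev_le_iff.2 hbc, fun j hij hjd => ?_,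
    fun j hjb hjd => ?_⟩
  · simpa using hall j.rev (Fin.le_rev_iff.2 hjd) (Fin.rev_le_rev.2 hij)
  · simpa using hend j.rev (Fin.rev_le_rev.2 hjb) (by simp only [Fin.val_rev] at hjd ⊢; omega)

lemma leftSign_cases (θ : Fin n → ℝ) {a c : Fin n} (hac : a ≤ c)
    (hleft : ∀ j : Fin n, a ≤ j → (j : ℕ) + 1 = c → θ j < θ c) :
    ((c : ℕ) = 0 ∧ leftSign θ c = 0) ∨ ((a : ℕ) < c ∧ leftSign θ c = -1) ∨
      ((a : ℕ) = c ∧ 0 < (c : ℕ) ∧ leftSign θ c ≤ 1) := by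
  rcases Nat.eq_zero_or_pos c with hc | hc
  · exact Or.inl ⟨hc, by simp [leftSign, hc]⟩
  rcases (Fin.le_def.1 hac).lt_or_eq with hac | hac
  · have := hleft ⟨c - 1, by omega⟩ (Fin.le_def.2 (show (a : ℕ) ≤ c - 1 by omega))
      (show c - 1 + 1 = (c : ℕ) by omega)
    exact Or.inr (Or.inl ⟨hac, by rw [leftSign, dif_pos hc, signP, if_neg (by linarith)]⟩)
  · exact Or.inr (Or.inr ⟨hac, hc, by rw [leftSign, dif_pos hc, signP]; split_ifs <;> norm_num⟩)

lemma rightSign_cases (θ : Fin n → ℝ) {b d : Fin n} (hdb : d ≤ b)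
    (hright : ∀ j : Fin n, j ≤ b → (j : ℕ) = d + 1 → θ j < θ d) :
    ((d : ℕ) + 1 = n ∧ rightSign θ d = 0) ∨ ((d : ℕ) < b ∧ rightSign θ d = -1) ∨
      ((d : ℕ) = b ∧ (d : ℕ) + 1 < n ∧ rightSign θ d ≤ 1) := by
  by_cases hd : (d : ℕ) + 1 < n
  swap
  · exact Or.inl ⟨by omega, by simp [rightSign, hd]⟩
  rcases (Fin.le_def.1 hdb).lt_or_eq with hdb | hdb
  · have := hright ⟨d + 1, hd⟩ (Fin.le_def.2 (show d + 1 ≤ (b : ℕ) by omega)) rfl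
    exact Or.inr (Or.inl ⟨hdb, by rw [rightSign, dif_pos hd, signP, if_neg (by linarith)]⟩)
  · exact Or.inr (Or.inr ⟨hdb, hd, by rw [rightSign, dif_pos hd, signP]; split_ifs <;> norm_num⟩)

lemma leftSign_add_rightSign_le_Cconst (θ : Fin n → ℝ) {a b c d : Fin n} (hac : a ≤ c)
    (hcd : c ≤ d) (hdb : d ≤ b)
    (hleft : ∀ j : Fin n, a ≤ j → (j : ℕ) + 1 = c → θ j < θ c)
    (hright : ∀ j : Fin n, j ≤ b → (j : ℕ) = d + 1 → θ j < θ d) :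
    leftSign θ c + rightSign θ d ≤ -2 * Cconst n c d a b := by
  have := Fin.le_def.1 hcd
  have := b.isLt
  rcases leftSign_cases θ hac hleft with ⟨hc, hL⟩ | ⟨hc, hL⟩ | ⟨hc, hc', hL⟩ <;>
  rcases rightSign_cases θ hdb hright with ⟨hd, hR⟩ | ⟨hd, hR⟩ | ⟨hd, hd', hR⟩ <;>
  · unfold Cconst
    split_ifs <;> first | omega | linarith

lemma card_Icc_eq {c d : Fin n} (hcd : c ≤ d) : (#(Icc c d) : ℝ) = (d : ℕ) - (c : ℕ) + 1 := by
  rw [Fin.card_Icc, Nat.cast_sub (by rw [Fin.le_def] at hcd; omega)]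
  push_cast
  ring

theorem card_filter_lt_le_uIJ {τ lam : ℝ} (hlam : 0 ≤ lam) {y θ : Fin n → ℝ}
    (hθ : θ ∈ sol τ lam y) {a b c d : Fin n} (hac : a ≤ c) (hcd : c ≤ d) (hdb : d ≤ b)
    (hleft : ∀ j : Fin n, a ≤ j → (j : ℕ) + 1 = c → θ j < θ c)
    (hright : ∀ j : Fin n, j ≤ b → (j : ℕ) = d + 1 → θ j < θ d) :
    (#{j ∈ Icc c d | y j < θ j} : ℝ) ≤ uIJ τ lam n c d a b := by
  have hcount := card_filter_lt_le_of_mem_sol hlam hθ hcd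
  have hsign := leftSign_add_rightSign_le_Cconst θ hac hcd hdb hleft hright
  rw [uIJ, ← card_Icc_eq hcd]
  nlinarith [mul_le_mul_of_nonneg_left hsign hlam]

lemma card_filter_eq_countP_sort (ε : Fin n → ℝ) (I : Finset (Fin n)) (p : ℝ → Prop)
    [DecidablePred p] :
    #{j ∈ I | p (ε j)} = ((I.val.map ε).sort (· ≤ ·)).countP (fun x => decide (p x)) := by
  rw [← Multiset.coe_countP, Multiset.sort_eq, Multiset.countP_map]
  rfl

lemma _root_.List.Pairwise.succ_le_countP_le_getElem {α : Type*} [LinearOrder α] {L : List α}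
    (hL : L.Pairwise (· ≤ ·)) {m : ℕ} (hm : m < L.length) :
    m + 1 ≤ L.countP (fun x => decide (x ≤ L[m])) := by
  calc m + 1 = (L.take (m + 1)).countP (fun x => decide (x ≤ L[m])) := by
        rw [List.countP_eq_length.2, List.length_take]
        · omega
        intro x hx
        obtain ⟨p, hp, rfl⟩ := List.mem_iff_getElem.1 hx
        simp only [List.length_take] at hp
        simpa [List.getElem_take] using
          hL.rel_get_of_le (a := ⟨p, by omega⟩) (b := ⟨m, hm⟩) (Fin.mk_le_mk.2 (by omega))
    _ ≤ _ := (List.take_sublist _ _).countP_le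

theorem le_card_filter_le_orderStat (ε : Fin n → ℝ) (I : Finset (Fin n)) {k : ℤ}
    (hk : k ≤ #I) : k ≤ #{j ∈ I | (ε j : EReal) ≤ orderStat ε I k} := by
  unfold orderStat
  split_ifs with h0 h1
  · omega
  · omega
  · have hlen : ((I.val.map ε).sort (· ≤ ·)).length = #I := by simp
    simp only [EReal.coe_le_coe_iff]
    rw [card_filter_eq_countP_sort ε I (· ≤ ((I.val.map ε).sort (· ≤ ·)).getD (k.toNat - 1) 0),
      List.getD_eq_getElem _ _ (by omega)]
    have := (Multiset.pairwise_sort (I.val.map ε) (· ≤ ·)).succ_le_countP_le_getElem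
      (m := k.toNat - 1) (by omega)
    omega

lemma sort_map_neg (s : Multiset ℝ) :
    (s.map Neg.neg).sort (· ≤ ·) = ((s.sort (· ≤ ·)).map Neg.neg).reverse := by
  refine List.Perm.eq_of_pairwise' (Multiset.pairwise_sort _ _) ?_ ?_
  · rw [List.pairwise_reverse, List.pairwise_map]
    exact (Multiset.pairwise_sort s _).imp fun h => neg_le_neg h
  · rw [← Multiset.coe_eq_coe, Multiset.sort_eq, Multiset.coe_reverse, ← Multiset.map_coe,
      Multiset.sort_eq]

theorem orderStat_neg (ε : Fin n → ℝ) (I : Finset (Fin n)) (k : ℤ) :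
    orderStat (-ε) I (#I + 1 - k) = -orderStat ε I k := by
  unfold orderStat
  split_ifs <;> try first | omega | (simp; done)
  have hlen : ((I.val.map ε).sort (· ≤ ·)).length = #I := by simp
  rw [Pi.neg_def, show (fun i => -ε i) = Neg.neg ∘ ε from rfl, ← Multiset.map_map, sort_map_neg,
    List.getD_reverse _ (by simp only [List.length_map, hlen]; omega),
    List.getD_eq_getElem _ _ (by simp only [List.length_map, hlen]; omega),
    List.getElem_map,
    List.getD_eq_getElem _ _ (by omega), EReal.coe_neg]
  congr 3
  simp only [List.length_map, hlen]
  omega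

lemma qloss_one_sub_neg (τ x : ℝ) : qloss (1 - τ) (-x) = qloss τ x := by
  unfold qloss
  rw [max_comm]
  ring_nf

lemma TV_neg (θ : Fin n → ℝ) : TV (-θ) = TV θ := by
  unfold TV
  refine sum_congr rfl fun j _ => ?_
  split_ifs
  · rw [Pi.neg_apply, Pi.neg_apply, neg_sub_neg, abs_sub_comm]
  · rfl

lemma obj_neg (τ lam : ℝ) (y θ : Fin n → ℝ) : obj (1 - τ) lam (-y) (-θ) = obj τ lam y θ := by
  simp only [obj, TV_neg, Pi.neg_apply, neg_sub_neg, ← neg_sub (y _), qloss_one_sub_neg]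

theorem neg_mem_sol {τ lam : ℝ} {y θ : Fin n → ℝ} (hθ : θ ∈ sol τ lam y) :
    -θ ∈ sol (1 - τ) lam (-y) := fun η => by
  simpa only [← obj_neg τ lam y, neg_neg] using hθ (-η)

theorem exists_sub_le_add_orderStat {τ lam : ℝ} (hlam : 0 ≤ lam) {θstar ε θhat : Fin n → ℝ}
    (hθ : θhat ∈ sol τ lam (fun j => θstar j + ε j)) {a b i : Fin n} (hai : a ≤ i) (hib : i ≤ b)
    {B : ℝ} (hB : ∀ k ∈ Icc a b, θstar k - θstar i ≤ B) :
    ∃ c d, a ≤ c ∧ c ≤ i ∧ i ≤ d ∧ d ≤ b ∧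
      ((θhat i - θstar i : ℝ) : EReal) ≤
        B + orderStat ε (Icc c d) (⌊uIJ τ lam n c d a b⌋ + 1) := by
  obtain ⟨c, hac, hci, hcI, hcend⟩ := exists_left_end (fun j => θhat i ≤ θhat j) hai le_rfl
  obtain ⟨d, hid, hdb, hdI, hdend⟩ := exists_right_end (fun j => θhat i ≤ θhat j) hib le_rfl
  have hI : ∀ j ∈ Icc c d, θhat i ≤ θhat j := fun j hj =>
    (le_total j i).elim (hcI j (mem_Icc.1 hj).1) (fun hij => hdI j hij (mem_Icc.1 hj).2)
  have hcd := hci.trans hid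
  have hcount := card_filter_lt_le_uIJ hlam hθ hac hcd hdb
    (fun j haj hjc => (not_le.1 (hcend j haj hjc)).trans_le (hI c (left_mem_Icc.2 hcd)))
    (fun j hjb hjd => (not_le.1 (hdend j hjb hjd)).trans_le (hI d (right_mem_Icc.2 hcd)))
  refine ⟨c, d, hac, hci, hid, hdb, ?_⟩
  set k := ⌊uIJ τ lam n c d a b⌋ + 1
  by_cases hk : k ≤ #(Icc c d)
  swap
  · rw [orderStat, if_neg (by omega), if_pos (by omega), EReal.coe_add_top]
    exact le_top
  by_contra hlt
  rw [not_le] at hlt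
  have hsub : {j ∈ Icc c d | (ε j : EReal) ≤ orderStat ε (Icc c d) k} ⊆
      {j ∈ Icc c d | θstar j + ε j < θhat j} := by
    refine monotone_filter_right _ fun j hj hεj => ?_
    have hlt' : ((B + ε j : ℝ) : EReal) < ((θhat i - θstar i : ℝ) : EReal) :=
      (EReal.coe_add B (ε j) ▸ add_le_add le_rfl hεj).trans_lt hlt
    have := hB j (mem_Icc.2 ⟨hac.trans (mem_Icc.1 hj).1, (mem_Icc.1 hj).2.trans hdb⟩)
    linarith [EReal.coe_lt_coe_iff.1 hlt', hI j hj]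
  have hk_le : (k : ℝ) ≤ #{j ∈ Icc c d | θstar j + ε j < θhat j} := by
    exact_mod_cast (le_card_filter_le_orderStat ε _ hk).trans (by exact_mod_cast card_le_card hsub)
  have hu_lt : uIJ τ lam n c d a b < k := by
    push_cast [k]
    exact Int.lt_floor_add_one _
  linarith

lemma floor_uIJ_one_sub_add_one (τ lam : ℝ) {a b c d : Fin n} (hcd : c ≤ d) :
    ⌊uIJ (1 - τ) lam n c d a b⌋ + 1 = #(Icc c d) + 1 - ⌈lIJ τ lam n c d a b⌉ := by
  have : uIJ (1 - τ) lam n c d a b = -lIJ τ lam n c d a b + ((#(Icc c d) : ℤ) : ℝ) := by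
    rw [Int.cast_natCast, card_Icc_eq hcd, uIJ, lIJ]
    ring
  rw [this, Int.floor_add_intCast, Int.floor_neg]
  ring

theorem exists_add_orderStat_le {τ lam : ℝ} (hlam : 0 ≤ lam) {θstar ε θhat : Fin n → ℝ}
    (hθ : θhat ∈ sol τ lam (fun j => θstar j + ε j)) {a b i : Fin n} (hai : a ≤ i) (hib : i ≤ b)
    {A : ℝ} (hA : ∀ k ∈ Icc a b, A ≤ θstar k - θstar i) :
    ∃ c d, a ≤ c ∧ c ≤ i ∧ i ≤ d ∧ d ≤ b ∧
      A + orderStat ε (Icc c d) ⌈lIJ τ lam n c d a b⌉ ≤ ((θhat i - θstar i : ℝ) : EReal) := by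
  have hθ' : -θhat ∈ sol (1 - τ) lam (fun j => (-θstar) j + (-ε) j) := by
    convert neg_mem_sol hθ using 2
    ext j
    simp only [Pi.neg_apply, neg_add]
  obtain ⟨c, d, hac, hci, hid, hdb, h⟩ := exists_sub_le_add_orderStat hlam hθ' hai hib
    (B := -A) fun k hk => by
      simpa only [Pi.neg_apply, neg_sub_neg, neg_sub] using neg_le_neg (hA k hk)
  refine ⟨c, d, hac, hci, hid, hdb, ?_⟩
  rw [floor_uIJ_one_sub_add_one τ lam (hci.trans hid), orderStat_neg, EReal.coe_neg,
    ← sub_eq_add_neg,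
    ← EReal.neg_add (Or.inl (EReal.coe_ne_bot A)) (Or.inl (EReal.coe_ne_top A))] at h
  rw [← EReal.neg_le_neg_iff, ← EReal.coe_neg]
  convert h using 2
  simp only [Pi.neg_apply]
  ring

end QTVD

theorem quantile_tvd_bias_variance_decomposition_general
    {n : ℕ} (τ lam : ℝ) (hlam : 0 ≤ lam)
    (θstar ε : Fin n → ℝ) (θhat : Fin n → ℝ)
    (hθ : θhat ∈ QTVD.sol τ lam (fun j => θstar j + ε j)) (i : Fin n) :
    (((θhat i - θstar i : ℝ) : EReal) ≤
      ⨅ (a : Fin n) (b : Fin n) (hai : a ≤ i) (hib : i ≤ b),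
        ((((Finset.Icc a b).sup' ⟨i, Finset.mem_Icc.mpr ⟨hai, hib⟩⟩
            (fun k => θstar k - θstar i) : ℝ) : EReal)
          + ⨆ (c : Fin n) (d : Fin n) (_ : a ≤ c) (_ : c ≤ i) (_ : i ≤ d) (_ : d ≤ b),
              QTVD.orderStat ε (Finset.Icc c d)
                (⌊QTVD.uIJ τ lam n (c : ℕ) (d : ℕ) (a : ℕ) (b : ℕ)⌋ + 1))) ∧
    ((⨆ (a : Fin n) (b : Fin n) (hai : a ≤ i) (hib : i ≤ b),
        ((((Finset.Icc a b).inf' ⟨i, Finset.mem_Icc.mpr ⟨hai, hib⟩⟩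
            (fun k => θstar k - θstar i) : ℝ) : EReal)
          + ⨅ (c : Fin n) (d : Fin n) (_ : a ≤ c) (_ : c ≤ i) (_ : i ≤ d) (_ : d ≤ b),
              QTVD.orderStat ε (Finset.Icc c d)
                ⌈QTVD.lIJ τ lam n (c : ℕ) (d : ℕ) (a : ℕ) (b : ℕ)⌉))
      ≤ ((θhat i - θstar i : ℝ) : EReal)) := by
  constructor
  · refine le_iInf₂ fun a b => le_iInf₂ fun hai hib => ?_
    obtain ⟨c, d, hac, hci, hid, hdb, h⟩ := QTVD.exists_sub_le_add_orderStat hlam hθ hai hib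
      (B := (Finset.Icc a b).sup' ⟨i, Finset.mem_Icc.mpr ⟨hai, hib⟩⟩ fun k => θstar k - θstar i)
      fun k hk => Finset.le_sup' (fun k => θstar k - θstar i) hk
    exact h.trans (add_le_add le_rfl
      (le_iSup₂_of_le c d (le_iSup₂_of_le hac hci (le_iSup₂_of_le hid hdb le_rfl))))
  · refine iSup₂_le fun a b => iSup₂_le fun hai hib => ?_
    obtain ⟨c, d, hac, hci, hid, hdb, h⟩ := QTVD.exists_add_orderStat_le hlam hθ hai hib
      (A := (Finset.Icc a b).inf' ⟨i, Finset.mem_Icc.mpr ⟨hai, hib⟩⟩ fun k => θstar k - θstar i)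
      fun k hk => Finset.inf'_le _ hk
    exact (add_le_add le_rfl
      (iInf₂_le_of_le c d (iInf₂_le_of_le hac hci (iInf₂_le_of_le hid hdb le_rfl)))).trans h

/-- Deterministic local bias–variance decomposition.
Under the model `y = θ* + ε`, any quantile TVD solution `θ̂ ∈ S^τ` satisfies, at
every location `i`, the two-sided bound given by a min over outer intervals `J ∋ i`
of a (positive bias) + (λ-dependent stochastic term) from above, and a max over
outer intervals of a (negative bias) + (stochastic term) from below. -/
theorem quantile_tvd_bias_variance_decomposition
    {n : ℕ} (τ lam : ℝ) (hτ0 : 0 < τ) (hτ1 : τ < 1) (hlam : 0 ≤ lam)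
    (θstar ε : Fin n → ℝ) (θhat : Fin n → ℝ)
    (hθ : θhat ∈ QTVD.sol τ lam (fun j => θstar j + ε j)) (i : Fin n) :
    (((θhat i - θstar i : ℝ) : EReal) ≤
      ⨅ (a : Fin n) (b : Fin n) (hai : a ≤ i) (hib : i ≤ b),
        ((((Finset.Icc a b).sup' ⟨i, Finset.mem_Icc.mpr ⟨hai, hib⟩⟩
            (fun k => θstar k - θstar i) : ℝ) : EReal)
          + ⨆ (c : Fin n) (d : Fin n) (_ : a ≤ c) (_ : c ≤ i) (_ : i ≤ d) (_ : d ≤ b),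
              QTVD.orderStat ε (Finset.Icc c d)
                (⌊QTVD.uIJ τ lam n (c : ℕ) (d : ℕ) (a : ℕ) (b : ℕ)⌋ + 1))) ∧
    ((⨆ (a : Fin n) (b : Fin n) (hai : a ≤ i) (hib : i ≤ b),
        ((((Finset.Icc a b).inf' ⟨i, Finset.mem_Icc.mpr ⟨hai, hib⟩⟩
            (fun k => θstar k - θstar i) : ℝ) : EReal)
          + ⨅ (c : Fin n) (d : Fin n) (_ : a ≤ c) (_ : c ≤ i) (_ : i ≤ d) (_ : d ≤ b),
              QTVD.orderStat ε (Finset.Icc c d)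
                ⌈QTVD.lIJ τ lam n (c : ℕ) (d : ℕ) (a : ℕ) (b : ℕ)⌉))
      ≤ ((θhat i - θstar i : ℝ) : EReal)) :=
  quantile_tvd_bias_variance_decomposition_general τ lam hlam θstar ε θhat hθ i
end
end
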